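/- The N-wise soft T₀ property is hereditary: if (X, τ₁,…,τ_N, E) is an N-wise soft T₀-space and Y is a nonempty subset of X, then the soft N-topological subspace (Y, (τ₁)_Y,…,(τ_N)_Y, E), where (τ_i)_Y = { e ↦ F(e) ∩ Y : F ∈ τ_i }, is an N-wise soft T₀-space. -/

import Mathlib

/-- A soft topology on `X` with parameter set `E`. -/
def IsSoftTopology {X E : Type*} (τ : Set (E → Set X)) : Prop :=
  (fun _ => (∅ : Set X)) ∈ τ ∧
  (fun _ => (Set.univ : Set X)) ∈ τ ∧
  (∀ F G, F ∈ τ → G ∈ τ → (fun e => F e ∩ G e) ∈ τ) ∧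
  (∀ S : Set (E → Set X), S ⊆ τ → (fun e => ⋃ F ∈ S, F e) ∈ τ)

/-- A soft set is soft `N`-open if it belongs to some of the `N` soft topologies. -/
def IsSoftNOpen {X E : Type*} {N : ℕ} (τ : Fin N → Set (E → Set X))
    (A : E → Set X) : Prop :=
  ∃ i, A ∈ τ i

/-- `N`-wise soft `T₀` separation axiom. -/
def IsNwiseSoftT0 {X E : Type*} {N : ℕ} (τ : Fin N → Set (E → Set X)) : Prop :=
  ∀ (x : X) (α : E) (y : X) (β : E), (x ≠ y ∨ α ≠ β) →
    (∃ A, IsSoftNOpen τ A ∧ x ∈ A α ∧ y ∉ A β) ∨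
    (∃ B, IsSoftNOpen τ B ∧ y ∈ B β ∧ x ∉ B α)

/-- `N`-wise soft `T₁` separation axiom. -/
def IsNwiseSoftT1 {X E : Type*} {N : ℕ} (τ : Fin N → Set (E → Set X)) : Prop :=
  ∀ (x : X) (α : E) (y : X) (β : E), (x ≠ y ∨ α ≠ β) →
    ∃ A, IsSoftNOpen τ A ∧ x ∈ A α ∧ y ∉ A β

/-- `N`-wise soft `T₂` (Hausdorff) separation axiom. -/
def IsNwiseSoftT2 {X E : Type*} {N : ℕ} (τ : Fin N → Set (E → Set X)) : Prop :=
  ∀ (x : X) (α : E) (y : X) (β : E), (x ≠ y ∨ α ≠ β) →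
    ∃ A B, IsSoftNOpen τ A ∧ IsSoftNOpen τ B ∧ x ∈ A α ∧ y ∈ B β ∧
      ∀ e, A e ∩ B e = ∅

/-- Soft `T₀` separation axiom for a single soft topology. -/
def IsSoftT0 {X E : Type*} (τ : Set (E → Set X)) : Prop :=
  ∀ (x : X) (α : E) (y : X) (β : E), (x ≠ y ∨ α ≠ β) →
    (∃ A ∈ τ, x ∈ A α ∧ y ∉ A β) ∨ (∃ B ∈ τ, y ∈ B β ∧ x ∉ B α)

/-- Soft `T₁` separation axiom for a single soft topology. -/
def IsSoftT1 {X E : Type*} (τ : Set (E → Set X)) : Prop :=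
  ∀ (x : X) (α : E) (y : X) (β : E), (x ≠ y ∨ α ≠ β) →
    ∃ A ∈ τ, x ∈ A α ∧ y ∉ A β

/-- Soft `T₂` separation axiom for a single soft topology. -/
def IsSoftT2 {X E : Type*} (τ : Set (E → Set X)) : Prop :=
  ∀ (x : X) (α : E) (y : X) (β : E), (x ≠ y ∨ α ≠ β) →
    ∃ A ∈ τ, ∃ B ∈ τ, x ∈ A α ∧ y ∈ B β ∧ ∀ e, A e ∩ B e = ∅

theorem IsSoftNOpen.inter_subspace {X E : Type*} {N : ℕ} {τ : Fin N → Set (E → Set X)}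
    {A : E → Set X} (hA : IsSoftNOpen τ A) (Y : Set X) :
    IsSoftNOpen (fun i => {G : E → Set X | ∃ F ∈ τ i, G = fun e => F e ∩ Y})
      (fun e => A e ∩ Y) :=
  let ⟨i, hi⟩ := hA
  ⟨i, A, hi, rfl⟩

theorem NwiseSoftT0_hereditary_general {X E : Type*} {N : ℕ}
    (τ : Fin N → Set (E → Set X))
    (h : IsNwiseSoftT0 τ) (Y : Set X) :
    ∀ (x : X) (α : E) (y : X) (β : E), x ∈ Y → y ∈ Y → (x ≠ y ∨ α ≠ β) →
      (∃ A, IsSoftNOpen (fun i => {G : E → Set X | ∃ F ∈ τ i, G = fun e => F e ∩ Y}) A ∧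
        x ∈ A α ∧ y ∉ A β) ∨
      (∃ B, IsSoftNOpen (fun i => {G : E → Set X | ∃ F ∈ τ i, G = fun e => F e ∩ Y}) B ∧
        y ∈ B β ∧ x ∉ B α) := by
  intro x α y β hx hy hne
  rcases h x α y β hne with ⟨A, hA, hxA, hyA⟩ | ⟨B, hB, hyB, hxB⟩
  · exact Or.inl ⟨_, hA.inter_subspace Y, ⟨hxA, hx⟩, fun hyA' => hyA hyA'.1⟩
  · exact Or.inr ⟨_, hB.inter_subspace Y, ⟨hyB, hy⟩, fun hxB' => hxB hxB'.1⟩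

theorem NwiseSoftT0_hereditary {X E : Type*} {N : ℕ}
    (τ : Fin N → Set (E → Set X)) (hτ : ∀ i, IsSoftTopology (τ i))
    (h : IsNwiseSoftT0 τ) (Y : Set X) (hY : Y.Nonempty) :
    ∀ (x : X) (α : E) (y : X) (β : E), x ∈ Y → y ∈ Y → (x ≠ y ∨ α ≠ β) →
      (∃ A, IsSoftNOpen (fun i => {G : E → Set X | ∃ F ∈ τ i, G = fun e => F e ∩ Y}) A ∧
        x ∈ A α ∧ y ∉ A β) ∨
      (∃ B, IsSoftNOpen (fun i => {G : E → Set X | ∃ F ∈ τ i, G = fun e => F e ∩ Y}) B ∧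
        y ∈ B β ∧ x ∉ B α) :=
  NwiseSoftT0_hereditary_general τ h Y
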